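/- For every 0 < a ≤ 1, the function q(δ) = ℓ(δ)/δ (with q(0) = 1 by continuous extension) satisfies: (i) q is even, i.e. q(δ) = q(−δ) for all δ; (ii) q is monotonically decreasing on [0, ∞); (iii) q(δ) ≤ q(0) = 1 for all δ ∈ ℝ. -/

import Mathlib

/-!
With `t = δ / 2` one has `log (e^{-δ} + 1) + log (e^δ + 1) = 2 log (2 cosh t)` and
`(e^δ - 1) / (e^δ + 1) = tanh t`, so for `δ ≠ 0`
`q(δ) = (log (2 cosh t) / log 2)^(a - 1) · tanh t / t`.
Both factors are even, nonnegative and equal to `1` at `δ = 0`. The first decreases in `|δ|`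
because `a ≤ 1` and `log (2 cosh t) ≥ log 2` increases; the second because the derivative of
`tanh t / t` has the sign of `t - sinh t cosh t ≤ 0`, while `tanh t ≤ t` bounds it by `1`.
-/

/-- `ℓ(δ) = F_a'(1+δ)`. -/
noncomputable def ell (a δ : ℝ) : ℝ :=
  (2 : ℝ) ^ (2 - a) * (Real.exp δ - 1) * Real.log 2 ^ (1 - a) *
    (Real.log (Real.exp (-δ) + 1) + Real.log (Real.exp δ + 1)) ^ (a - 1) /
    (Real.exp δ + 1)

/-- `q(δ) = ℓ(δ)/δ` for `δ ≠ 0`, continuously extended by `q(0) = 1`. -/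
noncomputable def qf (a δ : ℝ) : ℝ := if δ = 0 then 1 else ell a δ / δ

open Real Set

namespace Real

theorem exp_eq_exp_half_sq (x : ℝ) : exp x = exp (x / 2) ^ 2 := by
  rw [← exp_nat_mul]; ring_nf

theorem log_exp_neg_add_one_add_log_exp_add_one (x : ℝ) :
    log (exp (-x) + 1) + log (exp x + 1) = 2 * log (2 * cosh (x / 2)) := by
  have hsq : (exp (-x) + 1) * (exp x + 1) = (2 * cosh (x / 2)) ^ 2 := by
    rw [cosh_eq, exp_neg, exp_neg, exp_eq_exp_half_sq x]
    field_simp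
    ring
  rw [← log_mul (by positivity) (by positivity), hsq, log_pow]
  push_cast
  ring

theorem exp_sub_one_div_exp_add_one (x : ℝ) :
    (exp x - 1) / (exp x + 1) = tanh (x / 2) := by
  rw [tanh_eq, exp_neg, exp_eq_exp_half_sq x]
  field_simp

theorem one_lt_two_mul_cosh (x : ℝ) : 1 < 2 * cosh x := by
  linarith [one_le_cosh x]

theorem tanh_nonneg {x : ℝ} (hx : 0 ≤ x) : 0 ≤ tanh x := by
  rw [tanh_eq_sinh_div_cosh]
  exact div_nonneg (sinh_nonneg_iff.2 hx) (cosh_pos x).le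

theorem tanh_le_self {x : ℝ} (hx : 0 ≤ x) : tanh x ≤ x := by
  have hmono : MonotoneOn (fun t ↦ t * cosh t - sinh t) (Ici 0) := by
    have hderiv (t : ℝ) : HasDerivAt (fun t ↦ t * cosh t - sinh t) (t * sinh t) t := by
      refine (((hasDerivAt_id' t).mul (hasDerivAt_cosh t)).sub (hasDerivAt_sinh t)).congr_deriv ?_
      ring
    refine monotoneOn_of_deriv_nonneg (convex_Ici 0) (by fun_prop)
      (fun t _ ↦ (hderiv t).differentiableAt.differentiableWithinAt) fun t ht ↦ ?_
    rw [interior_Ici] at ht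
    rw [(hderiv t).deriv]
    exact mul_nonneg ht.out.le (sinh_nonneg_iff.2 ht.out.le)
  have hsinh : 0 * cosh 0 - sinh 0 ≤ x * cosh x - sinh x := hmono self_mem_Ici hx hx
  rw [tanh_eq_sinh_div_cosh, div_le_iff₀ (cosh_pos x)]
  simpa using hsinh

theorem antitoneOn_tanh_div_self : AntitoneOn (fun x ↦ tanh x / x) (Ioi 0) := by
  have hfun : (fun x ↦ tanh x / x) = fun x ↦ sinh x / (cosh x * x) := by
    ext x; rw [tanh_eq_sinh_div_cosh, div_div]
  have hderiv {x : ℝ} (hx : x ≠ 0) : HasDerivAt (fun x ↦ sinh x / (cosh x * x))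
      ((x - sinh x * cosh x) / (cosh x * x) ^ 2) x := by
    refine ((hasDerivAt_sinh x).div ((hasDerivAt_cosh x).mul (hasDerivAt_id' x))
      (mul_ne_zero (cosh_pos x).ne' hx)).congr_deriv ?_
    simp only [Pi.mul_apply]
    congr 1
    linear_combination x * cosh_sq x
  rw [hfun]
  refine antitoneOn_of_deriv_nonpos (convex_Ioi 0) ?_ ?_ fun x hx ↦ ?_
  · exact fun x hx ↦ (hderiv (ne_of_gt hx)).continuousAt.continuousWithinAt
  · rw [interior_Ioi]
    exact fun x hx ↦ (hderiv (ne_of_gt hx)).differentiableAt.differentiableWithinAt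
  rw [interior_Ioi] at hx
  rw [(hderiv (ne_of_gt hx)).deriv]
  refine div_nonpos_of_nonpos_of_nonneg ?_ (sq_nonneg _)
  have hx_le_sinh : x ≤ sinh x := self_le_sinh_iff.2 hx.out.le
  nlinarith [one_le_cosh x, sinh_nonneg_iff.2 hx.out.le]

end Real

noncomputable def logCoshRatio (δ : ℝ) : ℝ := log (2 * cosh (δ / 2)) / log 2

theorem one_le_logCoshRatio (δ : ℝ) : 1 ≤ logCoshRatio δ := by
  rw [logCoshRatio, one_le_div (log_pos one_lt_two)]
  exact log_le_log two_pos (by linarith [one_le_cosh (δ / 2)])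

theorem monotoneOn_logCoshRatio : MonotoneOn logCoshRatio (Ici 0) := by
  intro x hx y hy hxy
  have hcosh : cosh (x / 2) ≤ cosh (y / 2) := by
    rw [cosh_le_cosh, abs_of_nonneg (by linarith [hx.out]), abs_of_nonneg (by linarith [hy.out])]
    linarith
  refine div_le_div_of_nonneg_right ?_ (log_pos one_lt_two).le
  exact log_le_log (by linarith [one_lt_two_mul_cosh (x / 2)]) (by linarith)

theorem ell_eq (a δ : ℝ) : ell a δ = 2 * logCoshRatio δ ^ (a - 1) * tanh (δ / 2) := by
  have hL : 0 < log (2 * cosh (δ / 2)) := log_pos (one_lt_two_mul_cosh _)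
  have hlog2 : 0 < log 2 := log_pos one_lt_two
  rw [ell, log_exp_neg_add_one_add_log_exp_add_one, ← exp_sub_one_div_exp_add_one, logCoshRatio,
    mul_rpow two_pos.le hL.le, div_rpow hL.le hlog2.le, show 1 - a = -(a - 1) by ring,
    rpow_neg hlog2.le, show 2 - a = 1 - (a - 1) by ring, rpow_sub two_pos, rpow_one]
  have h2pow : (0 : ℝ) < 2 ^ (a - 1) := by positivity
  have hlog2pow : 0 < log 2 ^ (a - 1) := by positivity
  field_simp

theorem ell_neg (a δ : ℝ) : ell a (-δ) = -ell a δ := by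
  simp only [ell_eq, logCoshRatio, neg_div, cosh_neg, tanh_neg, mul_neg]

theorem qf_neg (a δ : ℝ) : qf a (-δ) = qf a δ := by
  by_cases hδ : δ = 0
  · simp [hδ]
  · rw [qf, qf, if_neg (neg_ne_zero.2 hδ), if_neg hδ, ell_neg, neg_div_neg_eq]

theorem qf_abs (a δ : ℝ) : qf a |δ| = qf a δ := by
  rcases abs_choice δ with h | h <;> rw [h]
  exact qf_neg a δ

theorem qf_eq_mul (a : ℝ) {δ : ℝ} (hδ : δ ≠ 0) :
    qf a δ = logCoshRatio δ ^ (a - 1) * (tanh (δ / 2) / (δ / 2)) := by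
  rw [qf, if_neg hδ, ell_eq]
  field_simp

theorem qf_le_one_of_nonneg {a : ℝ} (ha : a ≤ 1) {δ : ℝ} (hδ : 0 ≤ δ) : qf a δ ≤ 1 := by
  rcases hδ.eq_or_lt with rfl | hδ
  · simp [qf]
  have ht : 0 < δ / 2 := half_pos hδ
  rw [qf_eq_mul a hδ.ne']
  refine mul_le_one₀ (rpow_le_one_of_one_le_of_nonpos (one_le_logCoshRatio δ) (by linarith))
    (div_nonneg (tanh_nonneg ht.le) ht.le) ((div_le_one ht).2 (tanh_le_self ht.le))

theorem antitoneOn_qf {a : ℝ} (ha : a ≤ 1) : AntitoneOn (qf a) (Ici 0) := by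
  intro x hx y hy hxy
  rcases hx.out.eq_or_lt with rfl | hx'
  · simpa [qf] using qf_le_one_of_nonneg ha hy
  have hy' : 0 < y := hx'.trans_le hxy
  rw [qf_eq_mul a hx'.ne', qf_eq_mul a hy'.ne']
  refine mul_le_mul ?_ ?_ (div_nonneg (tanh_nonneg (by linarith)) (by linarith))
    (rpow_nonneg (zero_le_one.trans (one_le_logCoshRatio x)) _)
  · exact rpow_le_rpow_of_nonpos (by linarith [one_le_logCoshRatio x])
      (monotoneOn_logCoshRatio hx hy hxy) (by linarith)
  · exact antitoneOn_tanh_div_self (half_pos hx') (half_pos hy') (by linarith)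

theorem stmt_12_general (a : ℝ) (ha1 : a ≤ 1) :
    (∀ δ : ℝ, qf a δ = qf a (-δ)) ∧
    AntitoneOn (qf a) (Set.Ici 0) ∧
    qf a 0 = 1 ∧ (∀ δ : ℝ, qf a δ ≤ 1) :=
  ⟨fun δ ↦ (qf_neg a δ).symm, antitoneOn_qf ha1, by simp [qf],
    fun δ ↦ qf_abs a δ ▸ qf_le_one_of_nonneg ha1 (abs_nonneg δ)⟩

theorem stmt_12 (a : ℝ) (ha0 : 0 < a) (ha1 : a ≤ 1) :
    (∀ δ : ℝ, qf a δ = qf a (-δ)) ∧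
    AntitoneOn (qf a) (Set.Ici 0) ∧
    qf a 0 = 1 ∧ (∀ δ : ℝ, qf a δ ≤ 1) :=
  stmt_12_general a ha1
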